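/- arXiv:2008.08007 — 4 statements merged into one kernel-verified Lean document; each statement's English description precedes it below -/
import Mathlib

section
/- Let L be a lattice in ℝ^d (the set of integer combinations of a linearly independent family of vectors) and let v ∈ L be a nonzero lattice vector. Then there exists a Voronoi relevant vector v* of L (i.e., a vector v* ∈ L such that the halfspace {y : ‖y‖ ≤ ‖v* − y‖} defines a facet of the Voronoi cell of L) with ‖v − v*‖ < ‖v‖. In particular, taking η ∈ (0,1/2] maximal with η·v in the Voronoi cell 𝒱(L) = {y : ‖y‖ ≤ ‖w − y‖ for all nonzero w ∈ L}, the point η·v lies on the facet corresponding to some v* ∈ L, and for this v* one has ‖v − v*‖ < ‖v‖. -/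
/-- The Voronoi cell of a lattice `L ⊆ ℝ^d`: points at least as close to `0`
as to any nonzero lattice vector. -/
def VoronoiCell {d : ℕ} (L : Set (EuclideanSpace ℝ (Fin d))) :
    Set (EuclideanSpace ℝ (Fin d)) :=
  {y | ∀ w ∈ L, w ≠ 0 → ‖y‖ ≤ ‖w - y‖}

/-- A nonzero lattice vector `w ∈ L` is Voronoi relevant if the hyperplane
`{y : ‖y‖ = ‖w − y‖}` supports a facet of the Voronoi cell, i.e. the contact set
of the Voronoi cell with this hyperplane affinely spans the whole hyperplane. -/
def IsVoronoiRelevant {d : ℕ} (L : Set (EuclideanSpace ℝ (Fin d)))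
    (w : EuclideanSpace ℝ (Fin d)) : Prop :=
  w ∈ L ∧ w ≠ 0 ∧
    affineSpan ℝ {y | y ∈ VoronoiCell L ∧ ‖y‖ = ‖w - y‖}
      = affineSpan ℝ {y : EuclideanSpace ℝ (Fin d) | ‖y‖ = ‖w - y‖}

/-!
Among the nonzero lattice vectors `u` with `‖u‖² ≤ ⟪v, u⟫` (those in the closed ball with
diameter `[0, v]`; `v` itself is one, and there are finitely many) pick a shortest one, `w`.
Then `‖v - w‖² ≤ ‖v‖² - ‖w‖² < ‖v‖²`. If some other nonzero `u ∈ L` satisfied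
`‖u‖² ≤ ⟪w, u⟫`, then `u` and `w - u` would both be shorter than `w`, and since
`⟪v, u⟫ + ⟪v, w - u⟫ = ⟪v, w⟫ ≥ ‖w‖² ≥ ‖u‖² + ‖w - u‖²`, one of them would be a shorter
candidate. Hence `w / 2` satisfies every Voronoi inequality except the one for `w` strictly;
by local finiteness of `L` it does so on a neighbourhood, so the cell meets the bisector of
`0` and `w` in a relatively open subset, which spans the bisector.
-/

open Metric RealInnerProductSpace Filter Topology Submodule AffineSubspace

theorem setOf_exists_sum_intCast_smul_eq_span {ι E : Type*} [Fintype ι] [AddCommGroup E]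
    [Module ℝ E] (b : ι → E) :
    {x | ∃ a : ι → ℤ, x = ∑ i, (a i : ℝ) • b i} = span ℤ (Set.range b) := by
  ext x
  simp only [Set.mem_ofPred_eq, SetLike.mem_coe, mem_span_range_iff_exists_fun,
    Int.cast_smul_eq_zsmul, eq_comm]

theorem LinearIndependent.finite_span_int_inter {ι E : Type*} [NormedAddCommGroup E]
    [NormedSpace ℝ E] [FiniteDimensional ℝ E] {b : ι → E} (hb : LinearIndependent ℝ b)
    {s : Set E} (hs : Bornology.IsBounded s) : ((span ℤ (Set.range b) : Set E) ∩ s).Finite := by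
  rw [Set.inter_comm]
  refine (ZSpan.setFinite_inter (Module.Basis.extend hb.linearIndepOn_id) hs).subset
    (Set.inter_subset_inter_right _ (span_mono ?_))
  rw [Module.Basis.range_extend]
  exact hb.linearIndepOn_id.subset_extend _

theorem AffineSubspace.affineSpan_eq_of_mem_nhdsWithin {V P : Type*} [NormedAddCommGroup V]
    [NormedSpace ℝ V] [MetricSpace P] [NormedAddTorsor V P] {s : AffineSubspace ℝ P}
    {t : Set P} {c : P} (hc : c ∈ s) (hts : t ⊆ s) (ht : t ∈ 𝓝[s] c) :
    affineSpan ℝ t = s := by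
  refine le_antisymm (affineSpan_le.2 hts) fun y hy => ?_
  have hlim : Tendsto (fun r : ℝ => AffineMap.lineMap c y r) (𝓝[≠] 0) (𝓝[s] c) :=
    tendsto_nhdsWithin_iff.2 ⟨(AffineMap.lineMap_continuous.tendsto' 0 c (by simp)).mono_left
      nhdsWithin_le_nhds, Eventually.of_forall fun r => AffineMap.lineMap_mem r hc hy⟩
  obtain ⟨r, hrt, hr0⟩ := ((hlim.eventually ht).and self_mem_nhdsWithin).exists
  have := AffineMap.lineMap_mem r⁻¹ (subset_affineSpan ℝ t (mem_of_mem_nhdsWithin hc ht))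
    (subset_affineSpan ℝ t hrt)
  rwa [AffineMap.lineMap_lineMap_right, inv_mul_cancel₀ hr0, AffineMap.lineMap_apply_one] at this

theorem eventually_forall_norm_lt_norm_sub {E : Type*} [SeminormedAddCommGroup E] {A : Set E}
    (hA : ∀ r, (A ∩ closedBall 0 r).Finite) {c : E} (hc : ∀ u ∈ A, ‖c‖ < ‖u - c‖) :
    ∀ᶠ y in 𝓝 c, ∀ u ∈ A, ‖y‖ < ‖u - y‖ := by
  have hnear : ∀ᶠ y in 𝓝 c, ∀ u ∈ A ∩ closedBall 0 (2 * ‖c‖ + 2), ‖y‖ < ‖u - y‖ :=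
    (hA _).eventually_all.2 fun u hu =>
      continuous_norm.continuousAt.eventually_lt (by fun_prop) (hc u hu.1)
  filter_upwards [hnear, ball_mem_nhds c one_pos] with y hnear hyc u hu
  by_cases huR : ‖u‖ ≤ 2 * ‖c‖ + 2
  · exact hnear u ⟨hu, mem_closedBall_zero_iff.2 huR⟩
  · have hy : ‖y‖ < ‖c‖ + 1 := by
      rw [mem_ball_iff_norm] at hyc
      linarith [norm_le_norm_add_norm_sub' y c]
    linarith [norm_sub_norm_le u y]

section InnerProductSpace

variable {E : Type*} [NormedAddCommGroup E] [InnerProductSpace ℝ E]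

theorem norm_sq_add_norm_sub_sq_le {u w : E} (h : ‖u‖ ^ 2 ≤ ⟪w, u⟫) :
    ‖u‖ ^ 2 + ‖w - u‖ ^ 2 ≤ ‖w‖ ^ 2 := by
  linarith [norm_sub_sq_real w u]

theorem norm_sub_sq_le_inner_sub {u w : E} (h : ‖u‖ ^ 2 ≤ ⟪w, u⟫) :
    ‖w - u‖ ^ 2 ≤ ⟪w, w - u⟫ := by
  rw [inner_sub_right, real_inner_self_eq_norm_sq]
  linarith [norm_sub_sq_real w u]

theorem norm_lt_of_norm_sq_le_inner {u w : E} (h : ‖u‖ ^ 2 ≤ ⟪w, u⟫) (hu : u ≠ w) :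
    ‖u‖ < ‖w‖ := by
  have : 0 < ‖w - u‖ := norm_pos_iff.2 (sub_ne_zero.2 hu.symm)
  exact lt_of_pow_lt_pow_left₀ 2 (norm_nonneg w) (by nlinarith [norm_sq_add_norm_sub_sq_le h])

theorem norm_sub_lt_of_norm_sq_le_inner {v w : E} (h : ‖w‖ ^ 2 ≤ ⟪v, w⟫) (hw : w ≠ 0) :
    ‖v - w‖ < ‖v‖ := by
  have : 0 < ‖w‖ := norm_pos_iff.2 hw
  exact lt_of_pow_lt_pow_left₀ 2 (norm_nonneg v) (by nlinarith [norm_sub_sq_real v w])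

theorem exists_norm_sq_le_inner_forall_inner_lt_norm_sq {L : AddSubgroup E}
    (hL : ∀ r, ((L : Set E) ∩ closedBall 0 r).Finite) {v : E} (hv : v ∈ L) (hv0 : v ≠ 0) :
    ∃ w ∈ L, w ≠ 0 ∧ ‖w‖ ^ 2 ≤ ⟪v, w⟫ ∧ ∀ u ∈ L, u ≠ 0 → u ≠ w → ⟪w, u⟫ < ‖u‖ ^ 2 := by
  set S := {u | u ∈ L ∧ u ≠ 0 ∧ ‖u‖ ^ 2 ≤ ⟪v, u⟫}
  have hS : S.Finite := (hL ‖v‖).subset fun u ⟨huL, _, hu⟩ =>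
    ⟨huL, mem_closedBall_zero_iff.2 <| le_of_pow_le_pow_left₀ two_ne_zero (norm_nonneg v) <| by
      linarith [norm_sq_add_norm_sub_sq_le hu, sq_nonneg ‖v - u‖]⟩
  obtain ⟨w, ⟨hwL, hw0, hvw⟩, hmin⟩ :=
    S.exists_min_image norm hS ⟨v, hv, hv0, (real_inner_self_eq_norm_sq v).ge⟩
  refine ⟨w, hwL, hw0, hvw, fun u huL hu0 huw => lt_of_not_ge fun hwu => ?_⟩
  have hu : ⟪v, u⟫ < ‖u‖ ^ 2 := lt_of_not_ge fun h =>
    (hmin u ⟨huL, hu0, h⟩).not_gt (norm_lt_of_norm_sq_le_inner hwu huw)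
  have hwu' : ⟪v, w - u⟫ < ‖w - u‖ ^ 2 := lt_of_not_ge fun h =>
    (hmin (w - u) ⟨L.sub_mem hwL huL, sub_ne_zero.2 huw.symm, h⟩).not_gt
      (norm_lt_of_norm_sq_le_inner (norm_sub_sq_le_inner_sub hwu) (by simpa using hu0))
  rw [inner_sub_right] at hwu'
  linarith [norm_sq_add_norm_sub_sq_le hwu]

theorem norm_midpoint_zero_lt_norm_sub_iff (w u : E) :
    ‖midpoint ℝ 0 w‖ < ‖u - midpoint ℝ 0 w‖ ↔ ⟪w, u⟫ < ‖u‖ ^ 2 := by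
  rw [← sq_lt_sq₀ (norm_nonneg _) (norm_nonneg _), norm_sub_sq_real, midpoint_eq_smul_add,
    zero_add, inner_smul_right, real_inner_comm, invOf_eq_inv]
  constructor <;> intro h <;> linarith

theorem setOf_norm_eq_norm_sub_eq_perpBisector (w : E) :
    {y : E | ‖y‖ = ‖w - y‖} = AffineSubspace.perpBisector 0 w := by
  ext y
  simp [AffineSubspace.mem_perpBisector_iff_dist_eq, dist_eq_norm, norm_sub_rev]

end InnerProductSpace

theorem isVoronoiRelevant_of_forall_inner_lt_norm_sq {d : ℕ}
    {L : Set (EuclideanSpace ℝ (Fin d))} (hL : ∀ r, (L ∩ closedBall 0 r).Finite)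
    {w : EuclideanSpace ℝ (Fin d)} (hw : w ∈ L) (hw0 : w ≠ 0)
    (h : ∀ u ∈ L, u ≠ 0 → u ≠ w → ⟪w, u⟫ < ‖u‖ ^ 2) : IsVoronoiRelevant L w := by
  have hbisector := setOf_norm_eq_norm_sub_eq_perpBisector w
  have hnear : ∀ᶠ y in 𝓝 (midpoint ℝ 0 w), ∀ u ∈ L \ {0, w}, ‖y‖ < ‖u - y‖ :=
    eventually_forall_norm_lt_norm_sub
      (fun r => (hL r).subset (Set.inter_subset_inter_left _ Set.sdiff_subset))
      fun u ⟨huL, hu⟩ => (norm_midpoint_zero_lt_norm_sub_iff w u).2 <|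
        h u huL (fun hu0 => hu (.inl hu0)) fun huw => hu (.inr huw)
  refine ⟨hw, hw0, ?_⟩
  rw [hbisector, affineSpan_coe]
  refine affineSpan_eq_of_mem_nhdsWithin (midpoint_mem_perpBisector 0 w)
    (fun y hy => hbisector ▸ hy.2) (mem_nhdsWithin_iff_eventually.2 ?_)
  filter_upwards [hnear] with y hy hyH
  have hyw : ‖y‖ = ‖w - y‖ := (Set.ext_iff.1 hbisector y).2 hyH
  refine ⟨fun u hu hu0 => ?_, hyw⟩
  rcases eq_or_ne u w with rfl | huw
  · exact hyw.le
  · exact (hy u ⟨hu, by simp [hu0, huw]⟩).le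

/-- For any nonzero vector `v` of a lattice `L` (the integer combinations of a
linearly independent family), there is a Voronoi relevant vector `v*` of `L`
with `‖v − v*‖ < ‖v‖`. -/
theorem exists_voronoiRelevant_closer {d m : ℕ}
    (b : Fin m → EuclideanSpace ℝ (Fin d)) (hb : LinearIndependent ℝ b)
    (L : Set (EuclideanSpace ℝ (Fin d)))
    (hL : L = {x | ∃ a : Fin m → ℤ, x = ∑ i, (a i : ℝ) • b i})
    (v : EuclideanSpace ℝ (Fin d)) (hv : v ∈ L) (hv0 : v ≠ 0) :
    ∃ vstar ∈ L, IsVoronoiRelevant L vstar ∧ ‖v - vstar‖ < ‖v‖ := by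
  rw [setOf_exists_sum_intCast_smul_eq_span] at hL
  subst hL
  have hfin (r : ℝ) := hb.finite_span_int_inter (isBounded_closedBall (x := 0) (r := r))
  obtain ⟨w, hwL, hw0, hvw, hstrict⟩ :=
    exists_norm_sq_le_inner_forall_inner_lt_norm_sq (L := (span ℤ (Set.range b)).toAddSubgroup)
      hfin hv hv0
  exact ⟨w, hwL, isVoronoiRelevant_of_forall_inner_lt_norm_sq hfin hwL hw0 hstrict,
    norm_sub_lt_of_norm_sq_le_inner hvw hw0⟩
end

section
/- Let L be a lattice in ℝ^d, v ∈ L nonzero, η ∈ (0, 1], and v* ∈ L. If η·v ∈ 𝒱(L) and ‖v* − η·v‖ ≤ ‖η·v‖ (i.e., η·v is at least as close to v* as to 0), and v* is not a scalar multiple of v, then ‖v − v*‖ < ‖v‖. -/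
/-- If `η·v ∈ 𝒱(L)` for `η ∈ (0,1]`, `v ∈ L` nonzero, `v* ∈ L` satisfies
`‖v* − η·v‖ ≤ ‖η·v‖` and `v*` is not a scalar multiple of `v`,
then `‖v − v*‖ < ‖v‖`. -/
theorem norm_sub_lt_of_voronoi {d m : ℕ}
    (b : Fin m → EuclideanSpace ℝ (Fin d)) (hb : LinearIndependent ℝ b)
    (L : Set (EuclideanSpace ℝ (Fin d)))
    (hL : L = {x | ∃ a : Fin m → ℤ, x = ∑ i, (a i : ℝ) • b i})
    (v vstar : EuclideanSpace ℝ (Fin d)) (hv : v ∈ L) (hv0 : v ≠ 0)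
    (hvstar : vstar ∈ L) (η : ℝ) (hη : η ∈ Set.Ioc (0 : ℝ) 1)
    (hcell : η • v ∈ VoronoiCell L)
    (hclose : ‖vstar - η • v‖ ≤ ‖η • v‖)
    (hnotmul : ¬ ∃ t : ℝ, vstar = t • v) :
    ‖v - vstar‖ < ‖v‖ := by
  obtain ⟨hη0, hη1⟩ := hη
  have hvpos : (0:ℝ) < ‖v‖ := norm_pos_iff.mpr hv0
  -- From the Voronoi cell condition applied to `w = v`, we get `η ≤ 1 - η`.
  have hcv := hcell v hv hv0
  have h1 : v - η • v = (1 - η) • v := by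
    rw [sub_smul, one_smul]
  have hηle : η ≤ 1 - η := by
    rw [h1, norm_smul, norm_smul, Real.norm_eq_abs, Real.norm_eq_abs,
      abs_of_pos hη0, abs_of_nonneg (by linarith)] at hcv
    exact le_of_mul_le_mul_right hcv hvpos
  have h1η : (0:ℝ) < 1 - η := by linarith
  -- `(1-η) • v ≠ 0`
  have hne : (1 - η) • v ≠ 0 := smul_ne_zero (by linarith) hv0
  -- the two summands are not on the same ray
  have hns : ¬ SameRay ℝ ((1 - η) • v) (η • v - vstar) := by
    intro h
    obtain ⟨r, hr, hre⟩ := h.exists_nonneg_left hne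
    apply hnotmul
    refine ⟨η - r * (1 - η), ?_⟩
    have : r • ((1 - η) • v) = η • v - vstar := hre
    rw [smul_smul] at this
    have : vstar = η • v - (r * (1 - η)) • v := by
      rw [this]; abel
    rw [this, sub_smul]
  have hlt : ‖(1 - η) • v + (η • v - vstar)‖ < ‖(1 - η) • v‖ + ‖η • v - vstar‖ :=
    not_sameRay_iff_norm_add_lt.mp hns
  have heq : v - vstar = (1 - η) • v + (η • v - vstar) := by
    rw [sub_smul, one_smul]; abel
  have h2 : ‖η • v - vstar‖ ≤ η * ‖v‖ := by
    rw [← norm_neg, neg_sub]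
    calc ‖vstar - η • v‖ ≤ ‖η • v‖ := hclose
      _ = η * ‖v‖ := by rw [norm_smul, Real.norm_eq_abs, abs_of_pos hη0]
  calc ‖v - vstar‖ = ‖(1 - η) • v + (η • v - vstar)‖ := by rw [← heq]
    _ < ‖(1 - η) • v‖ + ‖η • v - vstar‖ := hlt
    _ ≤ (1 - η) * ‖v‖ + η * ‖v‖ := by
        rw [norm_smul, Real.norm_eq_abs, abs_of_pos h1η]
        linarith
    _ = ‖v‖ := by ring
end

section
/- Let P be a finite probability distribution on a set U ∪ {⊥} with P(u) ∝ e^{(ε/2)·s(u)} for a score function s : U ∪ {⊥} → ℝ, where s(⊥) = s⊥ is fixed. Let opt = max_{u ∈ U} s(u), and suppose opt > t where t = s⊥ + (2/ε)·ln(2|U|/β). Let U_good = {u ∈ U : s(u) ≥ opt − t}. Then P(not U_good) ≤ e^{(ε/2)(s⊥ − opt)} + |U|·e^{−(ε/2)t} ≤ β. -/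
/-!
Normalising by the single weight `e^{(ε/2)·opt}` of a maximiser only increases the mass of the
bad event; ⊥ then contributes `e^{(ε/2)(s⊥ − opt)}` and each of the at most `|U|` elements
scoring below `opt − t` contributes at most `e^{−(ε/2)t}`. The choice of `t` makes
`e^{(ε/2)(s⊥ − t)} = β/(2|U|)`, which dominates both exponentials, so the sum is at most
`β/(2|U|) + β/2 ≤ β`.
-/

open Finset Real

section ExponentialMechanism

variable {U : Type*} [Fintype U] {s : U → ℝ} {a opt : ℝ}

lemma exp_mul_le_sum_exp_mul_of_isGreatest (hopt : IsGreatest (Set.range s) opt) :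
    exp (a * opt) ≤ ∑ u, exp (a * s u) := by
  obtain ⟨u₀, rfl⟩ := hopt.1
  exact single_le_sum (f := fun u => exp (a * s u)) (fun _ _ => (exp_pos _).le) (mem_univ u₀)

lemma sum_filter_lt_exp_mul_le (ha : 0 ≤ a) (c : ℝ) [DecidablePred fun u => s u < c] :
    ∑ u ∈ univ.filter (fun u => s u < c), exp (a * s u) ≤ Fintype.card U * exp (a * c) :=
  calc ∑ u ∈ univ.filter (fun u => s u < c), exp (a * s u)
      ≤ ∑ _u ∈ univ.filter (fun u => s u < c), exp (a * c) :=
        sum_le_sum fun _ hu => exp_le_exp.mpr <|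
          mul_le_mul_of_nonneg_left (mem_filter.mp hu).2.le ha
    _ = #(univ.filter fun u => s u < c) * exp (a * c) := by rw [sum_const, nsmul_eq_mul]
    _ ≤ Fintype.card U * exp (a * c) := by gcongr; exact card_filter_le _ _

lemma exp_add_sum_filter_div_le (hopt : IsGreatest (Set.range s) opt) (ha : 0 ≤ a) (b c : ℝ)
    [DecidablePred fun u => s u < c] :
    (exp (a * b) + ∑ u ∈ univ.filter (fun u => s u < c), exp (a * s u))
        / (∑ u, exp (a * s u) + exp (a * b))
      ≤ exp (a * (b - opt)) + Fintype.card U * exp (a * (c - opt)) :=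
  calc (exp (a * b) + ∑ u ∈ univ.filter (fun u => s u < c), exp (a * s u))
        / (∑ u, exp (a * s u) + exp (a * b))
      ≤ (exp (a * b) + ∑ u ∈ univ.filter (fun u => s u < c), exp (a * s u)) / exp (a * opt) := by
        gcongr
        exact (exp_mul_le_sum_exp_mul_of_isGreatest hopt).trans
          (le_add_of_nonneg_right (exp_pos _).le)
    _ ≤ (exp (a * b) + Fintype.card U * exp (a * c)) / exp (a * opt) := by
        gcongr; exact sum_filter_lt_exp_mul_le ha c
    _ = exp (a * (b - opt)) + Fintype.card U * exp (a * (c - opt)) := by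
        rw [add_div, mul_div_assoc, ← exp_sub, ← exp_sub, mul_sub, mul_sub]

end ExponentialMechanism

lemma exp_mul_sub_add_log_eq {ε x : ℝ} (hε : ε ≠ 0) (hx : 0 < x) (b : ℝ) :
    exp ((ε / 2) * (b - (b + (2 / ε) * log x))) = x⁻¹ := by
  have : (ε / 2) * (b - (b + (2 / ε) * log x)) = -log x := by field_simp; ring
  rw [this, exp_neg, exp_log hx]

lemma exp_mul_sub_add_card_mul_exp_le {ε β N sbot opt t : ℝ} (hε : 0 < ε) (hβ : 0 < β)
    (hN : 1 ≤ N) (hsbot : 0 ≤ sbot) (ht : t = sbot + (2 / ε) * log (2 * N / β))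
    (hoptt : t ≤ opt) :
    exp ((ε / 2) * (sbot - opt)) + N * exp (-(ε / 2) * t) ≤ β := by
  have hthreshold : exp ((ε / 2) * (sbot - t)) = β / (2 * N) := by
    rw [ht, exp_mul_sub_add_log_eq hε.ne' (by positivity), inv_div]
  have hbot : exp ((ε / 2) * (sbot - opt)) ≤ β / (2 * N) := by
    rw [← hthreshold]; gcongr
  have hgood : exp (-(ε / 2) * t) ≤ β / (2 * N) := by
    rw [← hthreshold]
    exact exp_le_exp.mpr (by nlinarith)
  calc exp ((ε / 2) * (sbot - opt)) + N * exp (-(ε / 2) * t)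
      ≤ β / (2 * N) + N * (β / (2 * N)) := by gcongr
    _ = β / (2 * N) + β / 2 := by field_simp
    _ ≤ β / 2 + β / 2 := by gcongr; linarith
    _ = β := add_halves β

open Classical in
theorem exponential_mechanism_accuracy_general {U : Type*} [Fintype U]
    (ε β : ℝ) (hε : 0 < ε) (hβ0 : 0 < β)
    (s : U → ℝ) (sbot : ℝ) (hsbot : 0 ≤ sbot)
    (opt : ℝ) (hopt : IsGreatest (Set.range s) opt)
    (t : ℝ) (ht : t = sbot + (2 / ε) * Real.log (2 * (Fintype.card U) / β))
    (hoptt : t < opt) :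
    (Real.exp ((ε / 2) * sbot)
        + ∑ u ∈ Finset.univ.filter (fun u => s u < opt - t), Real.exp ((ε / 2) * s u))
        / ((∑ u : U, Real.exp ((ε / 2) * s u)) + Real.exp ((ε / 2) * sbot))
      ≤ Real.exp ((ε / 2) * (sbot - opt)) + (Fintype.card U) * Real.exp (-(ε / 2) * t) ∧
    Real.exp ((ε / 2) * (sbot - opt)) + (Fintype.card U) * Real.exp (-(ε / 2) * t) ≤ β := by
  have hcard : (1 : ℝ) ≤ Fintype.card U := by
    have : Nonempty U := hopt.1.nonempty
    exact_mod_cast Fintype.card_pos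
  refine ⟨?_, exp_mul_sub_add_card_mul_exp_le hε hβ0 hcard hsbot ht hoptt.le⟩
  convert exp_add_sum_filter_div_le hopt (by positivity : (0 : ℝ) ≤ ε / 2) sbot (opt - t)
    using 4
  ring

open Classical in
/-- Accuracy of the exponential mechanism over `U ∪ {⊥}`: the probability mass
of elements with score below `opt − t` (together with `⊥`) is at most
`e^{(ε/2)(s⊥ − opt)} + |U|·e^{−(ε/2)t}`, which is at most `β`, where
`t = s⊥ + (2/ε)·ln(2|U|/β)` and `opt > t`. -/
theorem exponential_mechanism_accuracy {U : Type*} [Fintype U] [Nonempty U]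
    (ε β : ℝ) (hε : 0 < ε) (hβ0 : 0 < β) (hβ1 : β < 1)
    (s : U → ℝ) (sbot : ℝ) (hsbot : 0 ≤ sbot)
    (opt : ℝ) (hopt : IsGreatest (Set.range s) opt)
    (t : ℝ) (ht : t = sbot + (2 / ε) * Real.log (2 * (Fintype.card U) / β))
    (hoptt : t < opt) :
    (Real.exp ((ε / 2) * sbot)
        + ∑ u ∈ Finset.univ.filter (fun u => s u < opt - t), Real.exp ((ε / 2) * s u))
        / ((∑ u : U, Real.exp ((ε / 2) * s u)) + Real.exp ((ε / 2) * sbot))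
      ≤ Real.exp ((ε / 2) * (sbot - opt)) + (Fintype.card U) * Real.exp (-(ε / 2) * t) ∧
    Real.exp ((ε / 2) * (sbot - opt)) + (Fintype.card U) * Real.exp (-(ε / 2) * t) ≤ β :=
  exponential_mechanism_accuracy_general ε β hε hβ0 s sbot hsbot opt hopt t ht hoptt
end

section
/- Let X and X' be finite multisets of points in the unit ball of ℝ^d with the following property: there is a bijection between X and X' pairing each x with x' such that ‖x − x'‖ ≤ η(x) for nonnegative values η(x). Then for every tuple of centers (c_1,…,c_k) in ℝ^d, the (k,p)-clustering cost satisfies cost_X'^p(c_1,…,c_k) ≤ (1+γ)·cost_X^p(c_1,…,c_k) + λ_{p,γ}·Σ_x η(x)^p, where cost_X^p(c_1,…,c_k) = Σ_{x ∈ X} (min_j ‖x − c_j‖)^p and λ_{p,γ} = (1+γ)/((1+γ)^{1/p} − 1)^p. -/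
/-!
Snapping a point by at most `η` moves its distance to the nearest center by at most `η`,
so each term `(min_j ‖x' - c_j‖)^p` is at most `(a + η)^p` with `a = min_j ‖x - c_j‖`.
Splitting `a + η ≤ max (t a) (t η / (t - 1))` with `t = (1 + γ)^(1/p)` and raising to the
`p`-th power gives `(a + η)^p ≤ (1 + γ) a^p + λ_{p,γ} η^p`; summing over the points finishes.
-/

open Finset

lemma add_le_max_mul_mul_div_sub_one {t : ℝ} (ht : 1 < t) (a b : ℝ) :
    a + b ≤ max (t * a) (t / (t - 1) * b) := by
  have ht₁ : 0 < t - 1 := sub_pos.mpr ht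
  rcases le_or_gt b ((t - 1) * a) with h | h
  · exact le_max_of_le_left (by linarith)
  · refine le_max_of_le_right ?_
    rw [div_mul_eq_mul_div, le_div_iff₀ ht₁]
    nlinarith

lemma Real.add_rpow_le_mul_add_mul {t p a b : ℝ} (ht : 1 < t) (hp : 0 ≤ p)
    (ha : 0 ≤ a) (hb : 0 ≤ b) :
    (a + b) ^ p ≤ t ^ p * a ^ p + (t / (t - 1)) ^ p * b ^ p := by
  have ht₀ : 0 ≤ t := by linarith
  have ht₁ : 0 ≤ t / (t - 1) := div_nonneg ht₀ (by linarith)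
  rw [← Real.mul_rpow ht₀ ha, ← Real.mul_rpow ht₁ hb]
  have hta : 0 ≤ (t * a) ^ p := by positivity
  have htb : 0 ≤ (t / (t - 1) * b) ^ p := by positivity
  rcases max_choice (t * a) (t / (t - 1) * b) with h | h <;>
  · have hmax := add_le_max_mul_mul_div_sub_one ht a b
    rw [h] at hmax
    have := Real.rpow_le_rpow (by positivity) hmax hp
    linarith

lemma Real.add_rpow_le_one_add_mul_add_mul {p γ a b : ℝ} (hp : 0 < p) (hγ : 0 < γ)
    (ha : 0 ≤ a) (hb : 0 ≤ b) :
    (a + b) ^ p ≤ (1 + γ) * a ^ p + (1 + γ) / ((1 + γ) ^ (1 / p) - 1) ^ p * b ^ p := by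
  have hγ₀ : (0 : ℝ) ≤ 1 + γ := by linarith
  set t := (1 + γ) ^ (1 / p)
  have ht : 1 < t := Real.one_lt_rpow (by linarith) (by positivity)
  have htp : t ^ p = 1 + γ := by
    rw [← Real.rpow_mul hγ₀, one_div_mul_cancel hp.ne', Real.rpow_one]
  have h := Real.add_rpow_le_mul_add_mul ht hp.le ha hb
  rwa [Real.div_rpow (by linarith) (by linarith), htp] at h

lemma iInf_dist_le_iInf_dist_add_dist {ι α : Type*} [PseudoMetricSpace α]
    (c : ι → α) (x y : α) :
    ⨅ j, dist y (c j) ≤ (⨅ j, dist x (c j)) + dist x y := by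
  cases isEmpty_or_nonempty ι
  · simp [dist_nonneg]
  · refine le_ciInf_add fun j => ?_
    calc ⨅ j, dist y (c j) ≤ dist y (c j) := ciInf_le ⟨0, by rintro _ ⟨j, rfl⟩; exact dist_nonneg⟩ j
      _ ≤ dist x (c j) + dist x y := by linarith [dist_triangle_left y (c j) x]

theorem snapped_points_coreset_general {d m k : ℕ}
    (p γ : ℝ) (hp : 1 ≤ p) (hγ : 0 < γ)
    (x x' : Fin m → EuclideanSpace ℝ (Fin d))
    (η : Fin m → ℝ) (hη : ∀ i, 0 ≤ η i)
    (hclose : ∀ i, dist (x i) (x' i) ≤ η i) :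
    ∀ c : Fin k → EuclideanSpace ℝ (Fin d),
      ∑ i, (⨅ j, dist (x' i) (c j)) ^ p
        ≤ (1 + γ) * ∑ i, (⨅ j, dist (x i) (c j)) ^ p
          + ((1 + γ) / ((1 + γ) ^ (1 / p) - 1) ^ p) * ∑ i, η i ^ p := by
  intro c
  rw [mul_sum, mul_sum, ← sum_add_distrib]
  refine sum_le_sum fun i _ => ?_
  have hnear : ⨅ j, dist (x' i) (c j) ≤ (⨅ j, dist (x i) (c j)) + η i :=
    (iInf_dist_le_iInf_dist_add_dist c (x i) (x' i)).trans (by linarith [hclose i])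
  calc (⨅ j, dist (x' i) (c j)) ^ p ≤ ((⨅ j, dist (x i) (c j)) + η i) ^ p :=
        Real.rpow_le_rpow (Real.iInf_nonneg fun _ => dist_nonneg) hnear (by linarith)
    _ ≤ _ := Real.add_rpow_le_one_add_mul_add_mul (by linarith) hγ
        (Real.iInf_nonneg fun _ => dist_nonneg) (hη i)

/-- Snapping argument: if two families of points in the unit ball are paired so
that `‖x_i − x'_i‖ ≤ η_i`, then for every tuple of `k` centers, the clustering
cost of the snapped points is at most `(1+γ)` times the original cost plus
`λ_{p,γ}·Σ_i η_i^p`, where `λ_{p,γ} = (1+γ)/((1+γ)^{1/p} − 1)^p`. -/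
theorem snapped_points_coreset {d m k : ℕ} (hk : 0 < k)
    (p γ : ℝ) (hp : 1 ≤ p) (hγ : 0 < γ)
    (x x' : Fin m → EuclideanSpace ℝ (Fin d))
    (hx : ∀ i, ‖x i‖ ≤ 1) (hx' : ∀ i, ‖x' i‖ ≤ 1)
    (η : Fin m → ℝ) (hη : ∀ i, 0 ≤ η i)
    (hclose : ∀ i, dist (x i) (x' i) ≤ η i) :
    ∀ c : Fin k → EuclideanSpace ℝ (Fin d),
      ∑ i, (⨅ j, dist (x' i) (c j)) ^ p
        ≤ (1 + γ) * ∑ i, (⨅ j, dist (x i) (c j)) ^ p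
          + ((1 + γ) / ((1 + γ) ^ (1 / p) - 1) ^ p) * ∑ i, η i ^ p :=
  snapped_points_coreset_general p γ hp hγ x x' η hη hclose
end
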